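/- Let X ∈ ℝ^{n×d_x}, Y ∈ ℝ^{n×d_y}, C ∈ ℝ^{M×d_x}, D ∈ ℝ^{M×d_y}, A ∈ ℝ^{ℓ×d_x}, B ∈ ℝ^{ℓ×d_y} be real matrices, let ε ≥ 0, and let k, m be integers with 1 ≤ k < m ≤ min(d_x,d_y). Set Φ = ‖X‖_F‖Y‖_F − ‖XᵀY‖_k. Assume: (i) ‖XᵀY − CᵀD‖ ≤ (1+ε)/(m−k)·Φ, and (ii) ‖CᵀD − AᵀB‖ ≤ (1/(m−k))·(‖X‖_F‖Y‖_F − ‖CᵀD‖_k). Then ‖XᵀY − AᵀB‖ ≤ ((2+ε)/(m−k) + (1+ε)·k/(m−k)²)·Φ. -/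

import Mathlib

open scoped BigOperators

theorem Matrix.isHermitian_transpose_mul_self {p q : ℕ} (M : Matrix (Fin p) (Fin q) ℝ) :
    (M.transpose * M).IsHermitian := by
  simpa using Matrix.isHermitian_conjTranspose_mul_self M

/-- `sval M i` is the `i`-th (0-indexed, in nonincreasing order) singular value of the
real matrix `M`, i.e. the square root of the `i`-th largest eigenvalue of `MᵀM`,
with the convention that it is `0` out of range. -/
noncomputable def sval {p q : ℕ} (M : Matrix (Fin p) (Fin q) ℝ) : ℕ → ℝ := fun i =>
  if h : i < q then
    Real.sqrt ((Matrix.isHermitian_transpose_mul_self M).eigenvalues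
      ((Tuple.sort (Matrix.isHermitian_transpose_mul_self M).eigenvalues) (Fin.rev ⟨i, h⟩)))
  else 0

/-- The spectral norm `‖M‖ = σ₁(M)`. -/
noncomputable def specNorm {p q : ℕ} (M : Matrix (Fin p) (Fin q) ℝ) : ℝ := sval M 0

/-- The Ky Fan `k`-norm `‖M‖_k = σ₁(M) + ⋯ + σ_k(M)`. -/
noncomputable def kyFan {p q : ℕ} (M : Matrix (Fin p) (Fin q) ℝ) (k : ℕ) : ℝ :=
  ∑ i ∈ Finset.range k, sval M i

/-- The nuclear norm `‖M‖_* = Σᵢ σᵢ(M)`. -/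
noncomputable def nucNorm {p q : ℕ} (M : Matrix (Fin p) (Fin q) ℝ) : ℝ :=
  kyFan M (min p q)

/-- The Frobenius norm `‖M‖_F`. -/
noncomputable def froNorm {p q : ℕ} (M : Matrix (Fin p) (Fin q) ℝ) : ℝ :=
  Real.sqrt (∑ i, ∑ j, (M i j) ^ 2)

/-!
By the triangle inequality `‖XᵀY − AᵀB‖ ≤ ‖XᵀY − CᵀD‖ + ‖CᵀD − AᵀB‖`. Weyl's inequality
`σᵢ(N) ≤ σᵢ(M) + ‖N − M‖` gives `‖XᵀY‖_k ≤ ‖CᵀD‖_k + k‖XᵀY − CᵀD‖`, so the merge error (ii)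
is at most `(Φ + k‖XᵀY − CᵀD‖)/(m − k)`; bounding `‖XᵀY − CᵀD‖` by (i) gives the constant.

Weyl's inequality is proved by counting dimensions, as in Courant–Fischer: the span of the
right singular vectors of `N` for `σ₀, …, σᵢ` and the span of those of `M` for `σᵢ, σᵢ₊₁, …`
have dimensions adding up to more than `q`, so they share a nonzero vector `x`. On it,
`σᵢ(N)‖x‖ ≤ ‖Nx‖ ≤ ‖Mx‖ + ‖(N − M)x‖ ≤ (σᵢ(M) + ‖N − M‖)‖x‖`.
-/

open Matrix Module Submodule
open scoped RealInnerProductSpace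

theorem Submodule.inf_ne_bot_of_finrank_lt_add {K V : Type*} [DivisionRing K] [AddCommGroup V]
    [Module K V] [FiniteDimensional K V] {S U : Submodule K V}
    (h : finrank K V < finrank K S + finrank K U) : S ⊓ U ≠ ⊥ := by
  intro hbot
  have := Submodule.finrank_sup_add_finrank_inf_eq S U
  rw [hbot, finrank_bot, add_zero] at this
  have := (S ⊔ U).finrank_le
  omega

namespace OrthonormalBasis
variable {ι 𝕜 E : Type*} [Fintype ι] [RCLike 𝕜] [NormedAddCommGroup E] [InnerProductSpace 𝕜 E]

theorem inner_eq_zero_of_mem_span_image (b : OrthonormalBasis ι 𝕜 E) {s : Set ι} {x : E}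
    (hx : x ∈ span 𝕜 (b '' s)) {j : ι} (hj : j ∉ s) : inner 𝕜 (b j) x = 0 := by
  suffices span 𝕜 (b '' s) ≤ (𝕜 ∙ b j)ᗮ from
    (mem_orthogonal_singleton_iff_inner_right.mp (this hx))
  rw [span_le]
  rintro - ⟨i, hi, rfl⟩
  exact mem_orthogonal_singleton_iff_inner_right.mpr
    (b.orthonormal.2 fun hji => hj (hji ▸ hi))

theorem finrank_span_image (b : OrthonormalBasis ι 𝕜 E) (s : Finset ι) :
    finrank 𝕜 (span 𝕜 (b '' s)) = s.card := by
  have hli : LinearIndependent 𝕜 fun i : (s : Set ι) => b i :=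
    b.orthonormal.linearIndependent.comp _ Subtype.coe_injective
  rw [Set.image_eq_range, finrank_span_eq_card hli]
  simp

end OrthonormalBasis

namespace Matrix

section Rayleigh
variable {n : Type*} [Fintype n] [DecidableEq n] {A : Matrix n n ℝ}

theorem IsHermitian.inner_toEuclideanLin_self (hA : A.IsHermitian) (x : EuclideanSpace ℝ n) :
    ⟪x, toEuclideanLin A x⟫ = ∑ j, hA.eigenvalues j * ⟪hA.eigenvectorBasis j, x⟫ ^ 2 := by
  rw [← hA.eigenvectorBasis.sum_inner_mul_inner]
  refine Finset.sum_congr rfl fun j _ => ?_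
  have hb : toEuclideanLin A (hA.eigenvectorBasis j) =
      hA.eigenvalues j • hA.eigenvectorBasis j := by
    rw [toLpLin_apply, hA.mulVec_eigenvectorBasis]; rfl
  rw [← isSymmetric_toEuclideanLin_iff.mpr hA, hb, real_inner_smul_left, real_inner_comm]
  ring

theorem IsHermitian.inner_toEuclideanLin_self_le_of_mem_span (hA : A.IsHermitian) {s : Set n}
    {c : ℝ} (hc : ∀ j ∈ s, hA.eigenvalues j ≤ c) {x : EuclideanSpace ℝ n}
    (hx : x ∈ span ℝ (hA.eigenvectorBasis '' s)) :
    ⟪x, toEuclideanLin A x⟫ ≤ c * ‖x‖ ^ 2 := by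
  rw [hA.inner_toEuclideanLin_self, ← hA.eigenvectorBasis.sum_sq_inner_right, Finset.mul_sum]
  refine Finset.sum_le_sum fun j _ => ?_
  by_cases hj : j ∈ s
  · exact mul_le_mul_of_nonneg_right (hc j hj) (sq_nonneg _)
  · simp [hA.eigenvectorBasis.inner_eq_zero_of_mem_span_image hx hj]

theorem IsHermitian.le_inner_toEuclideanLin_self_of_mem_span (hA : A.IsHermitian) {s : Set n}
    {c : ℝ} (hc : ∀ j ∈ s, c ≤ hA.eigenvalues j) {x : EuclideanSpace ℝ n}
    (hx : x ∈ span ℝ (hA.eigenvectorBasis '' s)) :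
    c * ‖x‖ ^ 2 ≤ ⟪x, toEuclideanLin A x⟫ := by
  rw [hA.inner_toEuclideanLin_self, ← hA.eigenvectorBasis.sum_sq_inner_right, Finset.mul_sum]
  refine Finset.sum_le_sum fun j _ => ?_
  by_cases hj : j ∈ s
  · exact mul_le_mul_of_nonneg_right (hc j hj) (sq_nonneg _)
  · simp [hA.eigenvectorBasis.inner_eq_zero_of_mem_span_image hx hj]

end Rayleigh

theorem norm_toEuclideanLin_sq {m n : Type*} [Fintype m] [Fintype n] [DecidableEq m] [DecidableEq n]
    (M : Matrix m n ℝ) (x : EuclideanSpace ℝ n) :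
    ‖toEuclideanLin M x‖ ^ 2 = ⟪x, toEuclideanLin (Mᵀ * M) x⟫ := by
  rw [toLpLin_mul_same, LinearMap.comp_apply, ← conjTranspose_eq_transpose_of_trivial,
    toEuclideanLin_conjTranspose_eq_adjoint, LinearMap.adjoint_inner_right,
    real_inner_self_eq_norm_sq]

end Matrix

section SingularValues
variable {p q : ℕ}

noncomputable def svalIndex (M : Matrix (Fin p) (Fin q) ℝ) (i : Fin q) : Fin q :=
  Tuple.sort (isHermitian_transpose_mul_self M).eigenvalues i.rev

/-- The span of the right singular vectors of `M` belonging to `σⱼ(M)`, `j ∈ s`. -/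
noncomputable def singularSpan (M : Matrix (Fin p) (Fin q) ℝ) (s : Finset (Fin q)) :
    Submodule ℝ (EuclideanSpace ℝ (Fin q)) :=
  span ℝ ((isHermitian_transpose_mul_self M).eigenvectorBasis '' (s.image (svalIndex M)))

theorem sval_of_lt (M : Matrix (Fin p) (Fin q) ℝ) {i : ℕ} (hi : i < q) :
    sval M i = √((isHermitian_transpose_mul_self M).eigenvalues (svalIndex M ⟨i, hi⟩)) :=
  dif_pos hi

theorem sval_of_le (M : Matrix (Fin p) (Fin q) ℝ) {i : ℕ} (hi : q ≤ i) : sval M i = 0 :=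
  dif_neg hi.not_gt

theorem sval_nonneg (M : Matrix (Fin p) (Fin q) ℝ) (i : ℕ) : 0 ≤ sval M i := by
  unfold sval; split <;> positivity

theorem sq_sval_of_lt (M : Matrix (Fin p) (Fin q) ℝ) {i : ℕ} (hi : i < q) :
    sval M i ^ 2 = (isHermitian_transpose_mul_self M).eigenvalues (svalIndex M ⟨i, hi⟩) := by
  rw [sval_of_lt M hi, Real.sq_sqrt]
  exact eigenvalues_conjTranspose_mul_self_nonneg M _

theorem antitone_eigenvalues_svalIndex (M : Matrix (Fin p) (Fin q) ℝ) :
    Antitone fun i => (isHermitian_transpose_mul_self M).eigenvalues (svalIndex M i) :=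
  fun _ _ hij => Tuple.monotone_sort (isHermitian_transpose_mul_self M).eigenvalues
    (Fin.rev_anti hij)

theorem svalIndex_injective (M : Matrix (Fin p) (Fin q) ℝ) : Function.Injective (svalIndex M) :=
  (Tuple.sort _).injective.comp Fin.rev_injective

theorem finrank_singularSpan (M : Matrix (Fin p) (Fin q) ℝ) (s : Finset (Fin q)) :
    finrank ℝ (singularSpan M s) = s.card := by
  rw [singularSpan, OrthonormalBasis.finrank_span_image,
    Finset.card_image_of_injective _ (svalIndex_injective M)]

theorem sval_mul_norm_le_of_mem_singularSpan (M : Matrix (Fin p) (Fin q) ℝ) {i : Fin q}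
    {s : Finset (Fin q)} (hs : ∀ j ∈ s, j ≤ i) {x : EuclideanSpace ℝ (Fin q)}
    (hx : x ∈ singularSpan M s) : sval M i * ‖x‖ ≤ ‖toEuclideanLin M x‖ := by
  have hev : ∀ j ∈ (s.image (svalIndex M) : Set (Fin q)),
      (isHermitian_transpose_mul_self M).eigenvalues (svalIndex M i) ≤
        (isHermitian_transpose_mul_self M).eigenvalues j := by
    rw [Finset.coe_image]
    rintro - ⟨j, hj, rfl⟩
    exact antitone_eigenvalues_svalIndex M (hs j hj)
  have h := (isHermitian_transpose_mul_self M).le_inner_toEuclideanLin_self_of_mem_span hev hx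
  rw [← norm_toEuclideanLin_sq, ← sq_sval_of_lt M i.isLt, ← mul_pow] at h
  exact (pow_le_pow_iff_left₀ (by positivity [sval_nonneg M i]) (norm_nonneg _) two_ne_zero).mp h

theorem norm_le_sval_mul_of_mem_singularSpan (M : Matrix (Fin p) (Fin q) ℝ) {i : Fin q}
    {s : Finset (Fin q)} (hs : ∀ j ∈ s, i ≤ j) {x : EuclideanSpace ℝ (Fin q)}
    (hx : x ∈ singularSpan M s) : ‖toEuclideanLin M x‖ ≤ sval M i * ‖x‖ := by
  have hev : ∀ j ∈ (s.image (svalIndex M) : Set (Fin q)),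
      (isHermitian_transpose_mul_self M).eigenvalues j ≤
        (isHermitian_transpose_mul_self M).eigenvalues (svalIndex M i) := by
    rw [Finset.coe_image]
    rintro - ⟨j, hj, rfl⟩
    exact antitone_eigenvalues_svalIndex M (hs j hj)
  have h := (isHermitian_transpose_mul_self M).inner_toEuclideanLin_self_le_of_mem_span hev hx
  rw [← norm_toEuclideanLin_sq, ← sq_sval_of_lt M i.isLt, ← mul_pow] at h
  exact (pow_le_pow_iff_left₀ (norm_nonneg _) (by positivity [sval_nonneg M i]) two_ne_zero).mp h

theorem singularSpan_univ (M : Matrix (Fin p) (Fin q) ℝ) : singularSpan M Finset.univ = ⊤ := by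
  rw [singularSpan,
    Finset.image_univ_of_surjective (Finite.surjective_of_injective (svalIndex_injective M)),
    Finset.coe_univ, Set.image_univ, ← OrthonormalBasis.coe_toBasis, Basis.span_eq]

theorem norm_toEuclideanLin_le_specNorm (M : Matrix (Fin p) (Fin q) ℝ)
    (x : EuclideanSpace ℝ (Fin q)) : ‖toEuclideanLin M x‖ ≤ specNorm M * ‖x‖ := by
  rcases Nat.eq_zero_or_pos q with rfl | hq
  · simp [Subsingleton.elim x 0]
  · exact norm_le_sval_mul_of_mem_singularSpan M (i := ⟨0, hq⟩) (fun j _ => Nat.zero_le j)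
      ((singularSpan_univ M).symm ▸ mem_top)

theorem sval_le_sval_add_specNorm_sub (N M : Matrix (Fin p) (Fin q) ℝ) (i : ℕ) :
    sval N i ≤ sval M i + specNorm (N - M) := by
  by_cases hi : i < q
  swap
  · rw [not_lt] at hi
    rw [sval_of_le N hi, sval_of_le M hi, zero_add]
    exact sval_nonneg _ 0
  set i' : Fin q := ⟨i, hi⟩
  have hdim : finrank ℝ (EuclideanSpace ℝ (Fin q)) <
      finrank ℝ (singularSpan N (Finset.Iic i')) + finrank ℝ (singularSpan M (Finset.Ici i')) := by
    rw [finrank_euclideanSpace_fin, finrank_singularSpan, finrank_singularSpan, Fin.card_Iic,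
      Fin.card_Ici]
    omega
  obtain ⟨x, ⟨hxN, hxM⟩, hx0⟩ := exists_mem_ne_zero_of_ne_bot (inf_ne_bot_of_finrank_lt_add hdim)
  refine le_of_mul_le_mul_right ?_ (norm_pos_iff.mpr hx0)
  calc sval N i * ‖x‖ ≤ ‖toEuclideanLin N x‖ :=
        sval_mul_norm_le_of_mem_singularSpan N (fun j hj => Finset.mem_Iic.mp hj) hxN
    _ ≤ ‖toEuclideanLin M x‖ + ‖toEuclideanLin (N - M) x‖ := by
        rw [map_sub, LinearMap.sub_apply]
        exact norm_le_norm_add_norm_sub' _ _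
    _ ≤ sval M i * ‖x‖ + specNorm (N - M) * ‖x‖ :=
        add_le_add (norm_le_sval_mul_of_mem_singularSpan M (fun j hj => Finset.mem_Ici.mp hj) hxM)
          (norm_toEuclideanLin_le_specNorm _ x)
    _ = (sval M i + specNorm (N - M)) * ‖x‖ := by ring

theorem specNorm_add_le (P Q : Matrix (Fin p) (Fin q) ℝ) :
    specNorm (P + Q) ≤ specNorm P + specNorm Q := by
  have h := sval_le_sval_add_specNorm_sub (P + Q) P 0
  rwa [add_sub_cancel_left] at h

theorem kyFan_le_kyFan_add_specNorm_sub (N M : Matrix (Fin p) (Fin q) ℝ) (k : ℕ) :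
    kyFan N k ≤ kyFan M k + k * specNorm (N - M) := by
  calc kyFan N k ≤ ∑ i ∈ Finset.range k, (sval M i + specNorm (N - M)) :=
        Finset.sum_le_sum fun i _ => sval_le_sval_add_specNorm_sub N M i
    _ = kyFan M k + k * specNorm (N - M) := by simp [kyFan, Finset.sum_add_distrib]

end SingularValues

theorem scod_error_bound_general
    {n dx dy nn l : ℕ}
    (X : Matrix (Fin n) (Fin dx) ℝ) (Y : Matrix (Fin n) (Fin dy) ℝ)
    (C : Matrix (Fin nn) (Fin dx) ℝ) (D : Matrix (Fin nn) (Fin dy) ℝ)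
    (A : Matrix (Fin l) (Fin dx) ℝ) (B : Matrix (Fin l) (Fin dy) ℝ)
    (ε : ℝ) (k m : ℕ) (hkm : k < m)
    (h1 : specNorm (Xᵀ * Y - Cᵀ * D) ≤
      (1 + ε) / ((m : ℝ) - (k : ℝ)) * (froNorm X * froNorm Y - kyFan (Xᵀ * Y) k))
    (h2 : specNorm (Cᵀ * D - Aᵀ * B) ≤
      (1 / ((m : ℝ) - (k : ℝ))) * (froNorm X * froNorm Y - kyFan (Cᵀ * D) k)) :
    specNorm (Xᵀ * Y - Aᵀ * B) ≤
      ((2 + ε) / ((m : ℝ) - (k : ℝ)) + (1 + ε) * (k : ℝ) / ((m : ℝ) - (k : ℝ)) ^ 2) *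
        (froNorm X * froNorm Y - kyFan (Xᵀ * Y) k) := by
  set r : ℝ := (m : ℝ) - k
  set Φ := froNorm X * froNorm Y - kyFan (Xᵀ * Y) k
  set e₁ := specNorm (Xᵀ * Y - Cᵀ * D)
  have hr : 0 < r := sub_pos.mpr (Nat.cast_lt.mpr hkm)
  have hmerge : specNorm (Cᵀ * D - Aᵀ * B) ≤ 1 / r * (Φ + k * e₁) := by
    refine h2.trans (mul_le_mul_of_nonneg_left ?_ (by positivity))
    linarith [kyFan_le_kyFan_add_specNorm_sub (Xᵀ * Y) (Cᵀ * D) k]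
  calc specNorm (Xᵀ * Y - Aᵀ * B)
      ≤ e₁ + specNorm (Cᵀ * D - Aᵀ * B) :=
        sub_add_sub_cancel (Xᵀ * Y) (Cᵀ * D) (Aᵀ * B) ▸ specNorm_add_le _ _
    _ ≤ e₁ + 1 / r * (Φ + k * e₁) := by gcongr
    _ = e₁ * (1 + k / r) + Φ / r := by field_simp; ring
    _ ≤ (1 + ε) / r * Φ * (1 + k / r) + Φ / r := by gcongr
    _ = ((2 + ε) / r + (1 + ε) * k / r ^ 2) * Φ := by field_simp; ring

/-- Theorem 3: combining the compression-error guarantee and the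
merge-error bound yields the SCOD error bound. -/
theorem scod_error_bound
    {n dx dy nn l : ℕ}
    (X : Matrix (Fin n) (Fin dx) ℝ) (Y : Matrix (Fin n) (Fin dy) ℝ)
    (C : Matrix (Fin nn) (Fin dx) ℝ) (D : Matrix (Fin nn) (Fin dy) ℝ)
    (A : Matrix (Fin l) (Fin dx) ℝ) (B : Matrix (Fin l) (Fin dy) ℝ)
    (ε : ℝ) (hε : 0 ≤ ε) (k m : ℕ) (hk1 : 1 ≤ k) (hkm : k < m) (hm : m ≤ min dx dy)
    (h1 : specNorm (Xᵀ * Y - Cᵀ * D) ≤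
      (1 + ε) / ((m : ℝ) - (k : ℝ)) * (froNorm X * froNorm Y - kyFan (Xᵀ * Y) k))
    (h2 : specNorm (Cᵀ * D - Aᵀ * B) ≤
      (1 / ((m : ℝ) - (k : ℝ))) * (froNorm X * froNorm Y - kyFan (Cᵀ * D) k)) :
    specNorm (Xᵀ * Y - Aᵀ * B) ≤
      ((2 + ε) / ((m : ℝ) - (k : ℝ)) + (1 + ε) * (k : ℝ) / ((m : ℝ) - (k : ℝ)) ^ 2) *
        (froNorm X * froNorm Y - kyFan (Xᵀ * Y) k) :=
  scod_error_bound_general X Y C D A B ε k m hkm h1 h2
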